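/- arXiv:1810.03061 — 2 statements merged into one kernel-verified Lean document; each statement's English description precedes it below -/
import Mathlib

section
/- There exist a Borel probability measure q on SL(2,ℝ) and a sequence (q_n)_{n∈ℕ} of Borel probability measures on SL(2,ℝ), all satisfying ∫ log‖α‖ dq(α) < ∞ and ∫ log‖α‖ dq_n(α) < ∞, such that q_n converges to q in the weak* topology, λ₊(q) = 0, and λ₊(q_n) ≥ 1 for all sufficiently large n. In particular, the function p ↦ λ₊(p) is not upper semicontinuous with respect to the weak* topology. -/
/-!
Take `q = δ_id` and `q_n = (1 - 1/(n+1)) δ_id + 1/(n+1) δ_{A^(n+1)}` with `A = diag(e, e⁻¹)`.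
The mass that `q_n` moves away from `id` tends to zero, so `q_n → q` weakly, but the matrix it is
moved to has `log ‖A^(n+1)‖ = n + 1`. Both measures live on the powers of `A`, where `log ‖·‖` is
additive along products, so `λ₊` is just the mean of `log ‖·‖`: `0` for `q` and `1` for each `q_n`.
-/

open MeasureTheory Filter Topology Matrix
open scoped ENNReal

noncomputable section

abbrev SL2 : Type := Matrix.SpecialLinearGroup (Fin 2) ℝ

/-- Topology on `SL(2,ℝ)` induced from the (finite-dimensional) space of matrices. -/
instance : TopologicalSpace SL2 :=
  TopologicalSpace.induced (fun α : SL2 => (α : Matrix (Fin 2) (Fin 2) ℝ)) inferInstance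

/-- Borel σ-algebra on `SL(2,ℝ)`. -/
instance : MeasurableSpace SL2 := borel SL2

/-- The ℓ² operator norm of a 2×2 real matrix. -/
noncomputable def opNorm (A : Matrix (Fin 2) (Fin 2) ℝ) : ℝ :=
  ‖LinearMap.toContinuousLinearMap (Matrix.toEuclideanLin A)‖

/-- Distance on `SL(2,ℝ)` induced by the operator norm. -/
noncomputable def dSL (α β : SL2) : ℝ :=
  opNorm ((α : Matrix (Fin 2) (Fin 2) ℝ) - (β : Matrix (Fin 2) (Fin 2) ℝ))

/-- The sequence `n ↦ (1/n) ∫ log (nrm (B(β_{n-1}) ⋯ B(β_1) B(β_0))) dqⁿ`. -/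
noncomputable def lyapSeq {X G : Type*} [MeasurableSpace X] [Monoid G]
    (B : X → G) (nrm : G → ℝ) (q : Measure X) [SigmaFinite q] : ℕ → ℝ := fun n =>
  (n : ℝ)⁻¹ * ∫ ω : Fin n → X,
    Real.log (nrm ((List.ofFn fun i => B (ω i)).reverse.prod)) ∂(Measure.pi fun _ => q)

/-- Top Lyapunov exponent of the i.i.d. cocycle generated by `B` with distribution `q`,
`λ₊(B,q) = lim_n (1/n) ∫ log (nrm (B(β_{n-1}) ⋯ B(β_0))) dqⁿ`. -/
noncomputable def lyapCocycle {X G : Type*} [MeasurableSpace X] [Monoid G]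
    (B : X → G) (nrm : G → ℝ) (q : Measure X) [SigmaFinite q] : ℝ :=
  limUnder atTop (lyapSeq B nrm q)

/-- Top Lyapunov exponent of i.i.d. products of matrices in `SL(2,ℝ)`. -/
noncomputable def lyapPlus (p : Measure SL2) [SigmaFinite p] : ℝ :=
  lyapCocycle id (fun α : SL2 => opNorm (α : Matrix (Fin 2) (Fin 2) ℝ)) p

/-- Bottom Lyapunov exponent of i.i.d. products of matrices in `SL(2,ℝ)`:
`λ₋(p) = lim_n (1/n) ∫ log (‖(α_{n-1}⋯α₀)⁻¹‖⁻¹) dpⁿ`. -/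
noncomputable def lyapMinus (p : Measure SL2) [SigmaFinite p] : ℝ :=
  lyapCocycle id (fun α : SL2 => (opNorm ((α⁻¹ : SL2) : Matrix (Fin 2) (Fin 2) ℝ))⁻¹) p

/-- Wasserstein-1 distance of two measures, with respect to a distance function `d`:
the infimum over all couplings `π` of `μ` and `ν` of `∫ d(x,y) dπ`. -/
noncomputable def W1 {M : Type*} [MeasurableSpace M] (d : M → M → ℝ) (μ ν : Measure M) : ℝ≥0∞ :=
  ⨅ (π : Measure (M × M)) (_ : π.map Prod.fst = μ) (_ : π.map Prod.snd = ν),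
    ∫⁻ x, ENNReal.ofReal (d x.1 x.2) ∂π

open scoped NNReal

section MultiplicativeNorm

variable {G : Type*} [Monoid G] {nrm : G → ℝ} {M : Submonoid G}

lemma log_nrm_list_prod
    (hM : ∀ x ∈ M, ∀ y ∈ M, Real.log (nrm (x * y)) = Real.log (nrm x) + Real.log (nrm y))
    {l : List G} (hl : ∀ x ∈ l, x ∈ M) :
    Real.log (nrm l.prod) = (l.map fun x => Real.log (nrm x)).sum := by
  induction l with
  | nil =>
    -- additivity at `1 * 1` forces `log (nrm 1) = 0`
    have h := hM 1 M.one_mem 1 M.one_mem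
    rw [one_mul] at h
    simp only [List.prod_nil, List.map_nil, List.sum_nil]
    linarith
  | cons a l ih =>
    rw [List.forall_mem_cons] at hl
    rw [List.prod_cons, hM a hl.1 _ (M.list_prod_mem hl.2), ih hl.2, List.map_cons,
      List.sum_cons]

variable [MeasurableSpace G]

lemma lyapSeq_id_eq_integral_log
    (hM : ∀ x ∈ M, ∀ y ∈ M, Real.log (nrm (x * y)) = Real.log (nrm x) + Real.log (nrm y))
    (μ : Measure G) [IsProbabilityMeasure μ] (hμM : ∀ᵐ g ∂μ, g ∈ M)
    (hint : Integrable (fun g => Real.log (nrm g)) μ) {n : ℕ} (hn : n ≠ 0) :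
    lyapSeq id nrm μ n = ∫ g, Real.log (nrm g) ∂μ := by
  have hae : ∀ᵐ ω ∂(Measure.pi fun _ : Fin n => μ), ∀ i, ω i ∈ M :=
    ae_all_iff.2 fun i => Measure.tendsto_eval_ae_ae.eventually hμM
  have hsum : (fun ω : Fin n → G => Real.log (nrm ((List.ofFn fun i => id (ω i)).reverse.prod)))
      =ᵐ[Measure.pi fun _ => μ] fun ω => ∑ i, Real.log (nrm (ω i)) := by
    filter_upwards [hae] with ω hω
    rw [log_nrm_list_prod hM (by simpa using hω), List.map_reverse, List.sum_reverse,
      List.map_ofFn, List.sum_ofFn]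
    rfl
  rw [lyapSeq, integral_congr_ae hsum,
    integral_finsetSum _ fun i _ => integrable_comp_eval (i := i) hint]
  simp only [integral_comp_eval (μ := fun _ => μ) hint.aestronglyMeasurable, Finset.sum_const,
    Finset.card_univ, Fintype.card_fin, nsmul_eq_mul]
  field_simp

lemma lyapCocycle_id_eq_integral_log
    (hM : ∀ x ∈ M, ∀ y ∈ M, Real.log (nrm (x * y)) = Real.log (nrm x) + Real.log (nrm y))
    (μ : Measure G) [IsProbabilityMeasure μ] (hμM : ∀ᵐ g ∂μ, g ∈ M)
    (hint : Integrable (fun g => Real.log (nrm g)) μ) :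
    lyapCocycle id nrm μ = ∫ g, Real.log (nrm g) ∂μ :=
  (tendsto_const_nhds.congr' <| (eventually_ne_atTop 0).mono fun _ hn =>
    (lyapSeq_id_eq_integral_log hM μ hμM hint hn).symm).limUnder_eq

end MultiplicativeNorm

section DiracMix

variable {Y : Type*} [MeasurableSpace Y]

def diracMix (p : ℝ≥0) (x y : Y) : Measure Y :=
  (1 - p) • Measure.dirac x + p • Measure.dirac y

variable {p : ℝ≥0} {x y : Y}

lemma isProbabilityMeasure_diracMix (hp : p ≤ 1) : IsProbabilityMeasure (diracMix p x y) := by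
  constructor
  simp [diracMix, tsub_add_cancel_of_le (ENNReal.coe_le_one_iff.2 hp)]

variable [MeasurableSingletonClass Y]

lemma ae_diracMix {s : Set Y} (hx : x ∈ s) (hy : y ∈ s) : ∀ᵐ z ∂diracMix p x y, z ∈ s := by
  rw [diracMix, ae_add_measure_iff]
  exact ⟨Measure.ae_smul_measure (by rwa [ae_dirac_eq]) _,
    Measure.ae_smul_measure (by rwa [ae_dirac_eq]) _⟩

lemma integrable_diracMix (f : Y → ℝ) : Integrable f (diracMix p x y) :=
  ((integrable_dirac enorm_lt_top).smul_measure_nnreal).add_measure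
    (integrable_dirac enorm_lt_top).smul_measure_nnreal

lemma integral_diracMix (hp : p ≤ 1) (f : Y → ℝ) :
    ∫ z, f z ∂diracMix p x y = (1 - p) * f x + p * f y := by
  rw [diracMix, integral_add_measure (integrable_dirac enorm_lt_top).smul_measure_nnreal
    (integrable_dirac enorm_lt_top).smul_measure_nnreal, integral_smul_nnreal_measure,
    integral_smul_nnreal_measure, integral_dirac, integral_dirac, NNReal.smul_def,
    NNReal.smul_def, NNReal.coe_sub hp, smul_eq_mul, smul_eq_mul, NNReal.coe_one]

lemma tendsto_integral_diracMix {p : ℕ → ℝ≥0} (hp1 : ∀ n, p n ≤ 1)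
    (hp : Tendsto p atTop (𝓝 0)) (x : Y) (y : ℕ → Y) {f : Y → ℝ} {C : ℝ}
    (hf : ∀ z, ‖f z‖ ≤ C) :
    Tendsto (fun n => ∫ z, f z ∂diracMix (p n) x (y n)) atTop (𝓝 (f x)) := by
  have hbound : ∀ n, ‖(p n : ℝ) * (f (y n) - f x)‖ ≤ p n * (C + C) := fun n => by
    rw [norm_mul, NNReal.norm_eq]
    exact mul_le_mul_of_nonneg_left ((norm_sub_le _ _).trans (add_le_add (hf _) (hf _))) (p n).2
  have hsmall : Tendsto (fun n => (p n : ℝ) * (f (y n) - f x)) atTop (𝓝 0) :=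
    squeeze_zero_norm hbound (by simpa using (NNReal.tendsto_coe.2 hp).mul_const (C + C))
  have hlim := hsmall.const_add (f x)
  rw [add_zero] at hlim
  refine hlim.congr fun n => ?_
  rw [integral_diracMix (hp1 n)]
  ring

end DiracMix

instance : BorelSpace SL2 := ⟨rfl⟩

-- together with `BorelSpace`, this provides `MeasurableSingletonClass SL2`
instance : T2Space SL2 :=
  Topology.IsEmbedding.t2Space (f := fun α : SL2 => (α : Matrix (Fin 2) (Fin 2) ℝ))
    ⟨⟨rfl⟩, Subtype.val_injective⟩

-- `‖v‖` is the sup norm of `Fin 2 → ℝ`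
lemma opNorm_diagonal (v : Fin 2 → ℝ) : opNorm (diagonal v) = ‖v‖ :=
  open scoped Matrix.Norms.L2Operator in Matrix.l2_opNorm_diagonal v

def expDiag : SL2 :=
  ⟨diagonal ![Real.exp 1, Real.exp (-1)], by simp [← Real.exp_add]⟩

lemma coe_expDiag_pow (k : ℕ) :
    ((expDiag ^ k : SL2) : Matrix (Fin 2) (Fin 2) ℝ) = diagonal ![Real.exp k, Real.exp (-k)] := by
  refine (Matrix.SpecialLinearGroup.coe_pow expDiag k).trans ?_
  rw [expDiag, Matrix.SpecialLinearGroup.coe_mk, diagonal_pow]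
  congr 1
  ext i
  fin_cases i <;> simp [← Real.exp_nat_mul]

lemma log_opNorm_expDiag_pow (k : ℕ) :
    Real.log (opNorm ((expDiag ^ k : SL2) : Matrix (Fin 2) (Fin 2) ℝ)) = k := by
  have hle : Real.exp (-k) ≤ Real.exp k :=
    Real.exp_le_exp.2 (by linarith [k.cast_nonneg (α := ℝ)])
  have hnorm : ‖![Real.exp k, Real.exp (-k)]‖ = Real.exp k := le_antisymm
    ((pi_norm_le_iff_of_nonneg (Real.exp_nonneg _)).2
      (Fin.forall_fin_two.2 ⟨by simp, by simp [hle]⟩))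
    (by simpa using norm_le_pi_norm ![Real.exp k, Real.exp (-k)] 0)
  rw [coe_expDiag_pow, opNorm_diagonal, hnorm, Real.log_exp]

lemma log_opNorm_mul_of_mem_powers {α β : SL2} (hα : α ∈ Submonoid.powers expDiag)
    (hβ : β ∈ Submonoid.powers expDiag) :
    Real.log (opNorm ((α * β : SL2) : Matrix (Fin 2) (Fin 2) ℝ))
      = Real.log (opNorm (α : Matrix (Fin 2) (Fin 2) ℝ))
        + Real.log (opNorm (β : Matrix (Fin 2) (Fin 2) ℝ)) := by
  obtain ⟨j, rfl⟩ := hα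
  obtain ⟨k, rfl⟩ := hβ
  rw [← pow_add, log_opNorm_expDiag_pow, log_opNorm_expDiag_pow, log_opNorm_expDiag_pow,
    Nat.cast_add]

lemma lyapPlus_eq_integral_of_ae_mem_powers (μ : Measure SL2) [IsProbabilityMeasure μ]
    (hμ : ∀ᵐ α ∂μ, α ∈ Submonoid.powers expDiag)
    (hint : Integrable (fun α : SL2 => Real.log (opNorm (α : Matrix (Fin 2) (Fin 2) ℝ))) μ) :
    lyapPlus μ = ∫ α, Real.log (opNorm (α : Matrix (Fin 2) (Fin 2) ℝ)) ∂μ :=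
  lyapCocycle_id_eq_integral_log (fun _ hα _ hβ => log_opNorm_mul_of_mem_powers hα hβ) μ hμ hint

/-- **Failure of upper semicontinuity of `λ₊` in the weak* topology.**
There are Borel probability measures `q` and `q_n` on `SL(2,ℝ)`, all with
`∫ log‖α‖ dq < ∞`, such that `q_n → q` in the weak* topology (i.e. tested against all
bounded continuous functions), `λ₊(q) = 0`, yet `λ₊(q_n) ≥ 1` for all large `n`. -/
theorem lyapPlus_not_upper_semicontinuous_weakstar :
    ∃ (q : ProbabilityMeasure SL2) (qn : ℕ → ProbabilityMeasure SL2),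
      (∫⁻ α, ENNReal.ofReal (Real.log (opNorm (α : Matrix (Fin 2) (Fin 2) ℝ)))
          ∂(q : Measure SL2) < ⊤) ∧
      (∀ n, ∫⁻ α, ENNReal.ofReal (Real.log (opNorm (α : Matrix (Fin 2) (Fin 2) ℝ)))
          ∂(qn n : Measure SL2) < ⊤) ∧
      (∀ f : BoundedContinuousFunction SL2 ℝ,
        Tendsto (fun n => ∫ α, f α ∂(qn n : Measure SL2)) atTop
          (𝓝 (∫ α, f α ∂(q : Measure SL2)))) ∧
      lyapPlus (q : Measure SL2) = 0 ∧
      (∃ N : ℕ, ∀ n ≥ N, 1 ≤ lyapPlus (qn n : Measure SL2)) := by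
  set p : ℕ → ℝ≥0 := fun n => (n + 1 : ℝ≥0)⁻¹
  have hp1 (n : ℕ) : p n ≤ 1 := inv_le_one_of_one_le₀ le_add_self
  have hp : Tendsto p atTop (𝓝 0) := by
    simpa [p] using tendsto_one_div_add_atTop_nhds_zero_nat (𝕜 := ℝ≥0)
  have hlog_one : Real.log (opNorm ((1 : SL2) : Matrix (Fin 2) (Fin 2) ℝ)) = 0 := by
    simpa using log_opNorm_expDiag_pow 0
  refine ⟨⟨Measure.dirac 1, inferInstance⟩,
    fun n => ⟨diracMix (p n) 1 (expDiag ^ (n + 1)), isProbabilityMeasure_diracMix (hp1 n)⟩,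
    (integrable_dirac enorm_lt_top).lintegral_lt_top,
    fun n => (integrable_diracMix _).lintegral_lt_top, fun f => ?_, ?_, 0, fun n _ => ?_⟩
  · rw [ProbabilityMeasure.coe_mk, integral_dirac]
    exact tendsto_integral_diracMix hp1 hp 1 _ f.norm_coe_le_norm
  · change lyapPlus (Measure.dirac 1) = 0
    rw [lyapPlus_eq_integral_of_ae_mem_powers _ (by simp [ae_dirac_eq, one_mem])
      (integrable_dirac enorm_lt_top), integral_dirac, hlog_one]
  · have := isProbabilityMeasure_diracMix (x := 1) (y := expDiag ^ (n + 1)) (hp1 n)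
    change 1 ≤ lyapPlus (diracMix (p n) 1 (expDiag ^ (n + 1)))
    rw [lyapPlus_eq_integral_of_ae_mem_powers _ (ae_diracMix (one_mem _) ⟨n + 1, rfl⟩)
      (integrable_diracMix _), integral_diracMix (hp1 n),
      hlog_one, log_opNorm_expDiag_pow]
    simp [p, Nat.cast_add_one_ne_zero]
end
end

section
/- Let n ≥ 1 be an integer, ε = 1/(n(n+1)) and δ = arctan ε. Set D_k = diag(k, k⁻¹) and E_k = diag(k⁻¹, k) for k ∈ ℕ, R_ε = [[1,0],[ε,1]], and R_δ = [[cos δ, −sin δ],[sin δ, cos δ]]. Then the product P = (D_n R_ε) · D_n · (D_{n+1} R_δ) · E_{n+1} · (E_n R_ε) is an antidiagonal matrix (both of its diagonal entries are 0). Consequently P maps the horizontal axis ℝ·(1,0) onto the vertical axis ℝ·(0,1) and maps the vertical axis onto the horizontal axis. -/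
/-!
Write `c = cos δ`, `s = sin δ`. The conjugated factors are
`D_n R_ε D_n = [[n², 0], [ε, n⁻²]]`, `D_{n+1} R_δ E_{n+1} = [[c, -(n+1)² s], [s/(n+1)², c]]` and
`E_n R_ε = [[n⁻¹, 0], [n ε, n]]`, so both diagonal entries of `P` are multiples of
`c - n²(n+1)² ε s`. This vanishes because `tan δ = ε` gives `s = ε c` and `n(n+1) ε = 1`.
The off-diagonal entries are nonzero since `cos δ > 0`, so `P` swaps the two coordinate axes.
-/

open Matrix

theorem Matrix.map_toLin'_span_horizontal {K : Type*} [Field K] (M : Matrix (Fin 2) (Fin 2) K)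
    (h00 : M 0 0 = 0) (h10 : M 1 0 ≠ 0) :
    Submodule.map (toLin' M) (Submodule.span K {![1, 0]}) = Submodule.span K {![0, 1]} := by
  have hv : M *ᵥ ![1, 0] = M 1 0 • ![0, 1] := by
    ext i; fin_cases i <;> simp [mulVec, dotProduct, h00]
  rw [Submodule.map_span, Set.image_singleton, toLin'_apply, hv,
    Submodule.span_singleton_smul_eq h10.isUnit]

theorem Matrix.map_toLin'_span_vertical {K : Type*} [Field K] (M : Matrix (Fin 2) (Fin 2) K)
    (h11 : M 1 1 = 0) (h01 : M 0 1 ≠ 0) :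
    Submodule.map (toLin' M) (Submodule.span K {![0, 1]}) = Submodule.span K {![1, 0]} := by
  have hv : M *ᵥ ![0, 1] = M 0 1 • ![1, 0] := by
    ext i; fin_cases i <;> simp [mulVec, dotProduct, h11]
  rw [Submodule.map_span, Set.image_singleton, toLin'_apply, hv,
    Submodule.span_singleton_smul_eq h01.isUnit]

theorem block_product_eq_antidiagonal {K : Type*} [Field K] (a b ε c s : K)
    (ha : a ≠ 0) (hb : b ≠ 0) (hε : ε = (a * b)⁻¹) (hs : s = ε * c) :
    (!![a, 0; 0, a⁻¹] * !![1, 0; ε, 1]) * !![a, 0; 0, a⁻¹] *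
        (!![b, 0; 0, b⁻¹] * !![c, -s; s, c]) * !![b⁻¹, 0; 0, b] *
        (!![a⁻¹, 0; 0, a] * !![1, 0; ε, 1]) =
      !![0, -(a ^ 2 * b * c); c * (1 + ε ^ 2) / (a ^ 2 * b), 0] := by
  simp only [mul_fin_two, EmbeddingLike.apply_eq_iff_eq, vecCons_inj, and_true]
  subst hs hε
  refine ⟨⟨?_, ?_⟩, ?_, ?_⟩ <;> field_simp <;> ring

/-- **The perturbed block of five matrices is antidiagonal.**
For `n ≥ 1`, `ε = 1/(n(n+1))`, `δ = arctan ε`, `D_k = diag(k, k⁻¹)`, `E_k = diag(k⁻¹, k)`,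
`R_ε = [[1,0],[ε,1]]` and `R_δ` the rotation by `δ`, the product
`P = (D_n R_ε) · D_n · (D_{n+1} R_δ) · E_{n+1} · (E_n R_ε)` has both diagonal entries
equal to `0`; consequently `P` maps the horizontal axis `ℝ·(1,0)` onto the vertical axis
`ℝ·(0,1)` and the vertical axis onto the horizontal axis. -/
theorem block5_antidiagonal
    (n : ℕ) (hn : 1 ≤ n) (ε δ : ℝ)
    (hε : ε = 1 / (n * (n + 1)))
    (hδ : δ = Real.arctan ε)
    (D E : ℕ → Matrix (Fin 2) (Fin 2) ℝ)
    (hD : ∀ k, D k = !![(k : ℝ), 0; 0, (k : ℝ)⁻¹])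
    (hE : ∀ k, E k = !![(k : ℝ)⁻¹, 0; 0, (k : ℝ)])
    (Rε Rδ : Matrix (Fin 2) (Fin 2) ℝ)
    (hRε : Rε = !![1, 0; ε, 1])
    (hRδ : Rδ = !![Real.cos δ, -Real.sin δ; Real.sin δ, Real.cos δ])
    (P : Matrix (Fin 2) (Fin 2) ℝ)
    (hP : P = (D n * Rε) * D n * (D (n + 1) * Rδ) * E (n + 1) * (E n * Rε)) :
    P 0 0 = 0 ∧ P 1 1 = 0 ∧
    Submodule.map (Matrix.toLin' P) (Submodule.span ℝ {![1, 0]}) =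
      Submodule.span ℝ {![0, 1]} ∧
    Submodule.map (Matrix.toLin' P) (Submodule.span ℝ {![0, 1]}) =
      Submodule.span ℝ {![1, 0]} := by
  have hn0 : (n : ℝ) ≠ 0 := Nat.cast_ne_zero.mpr (by omega)
  have hcos : 0 < Real.cos δ := hδ ▸ Real.cos_arctan_pos ε
  have hsin : Real.sin δ = ε * Real.cos δ := by
    rw [hδ, Real.sin_arctan, Real.cos_arctan]; ring
  have hPeq : P = !![0, -(n ^ 2 * (n + 1) * Real.cos δ);
      Real.cos δ * (1 + ε ^ 2) / (n ^ 2 * (n + 1)), 0] := by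
    rw [hP, hD, hD, hE, hE, hRε, hRδ, Nat.cast_succ]
    exact block_product_eq_antidiagonal _ _ _ _ _ hn0 (by positivity) (by rw [hε, one_div]) hsin
  have h00 : P 0 0 = 0 := by rw [hPeq]; rfl
  have h11 : P 1 1 = 0 := by rw [hPeq]; rfl
  have h01 : P 0 1 ≠ 0 := by rw [hPeq]; exact neg_ne_zero.mpr (by positivity)
  have h10 : P 1 0 ≠ 0 := by rw [hPeq]; exact div_ne_zero (by positivity) (by positivity)
  exact ⟨h00, h11, P.map_toLin'_span_horizontal h00 h10, P.map_toLin'_span_vertical h11 h01⟩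
end
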